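/- arXiv:0911.0475 — 5 statements merged into one kernel-verified Lean document; each statement's English description precedes it below -/
import Mathlib

section
/- Let b₁,…,b_N ∈ ℝ² be nonzero vectors ordered clockwise projectively. Call a nonzero vector v = (v₁,v₂) ∈ ℝ² 'upper' if v₂ > 0 or (v₂ = 0 and v₁ > 0), and 'lower' otherwise. Then Σ_{1≤j<k≤N} det⁺(b_j,b_k) = Σ |det(b_j,b_k)|, where the right-hand sum runs over all pairs j < k such that exactly one of b_j, b_k is upper. -/
/-!
The identity holds term by term. For `u = b j` preceding `v = b k` with `u₂, v₂ ≠ 0`, the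
ordering says `det(u, v) = u₂ v₂ (u₁/u₂ − v₁/v₂)` has the bracket `≤ 0`, so `det(u, v) ≤ 0` when
`u, v` lie on the same side of `L` and `≥ 0` otherwise; the horizontal cases are checked directly.
Hence `det⁺(u, v)` vanishes for pairs on the same side and equals `|det(u, v)|` for the others.
-/

open Finset

/-- `det(u,v) = u₁v₂ − u₂v₁` for `u, v ∈ ℝ²`. -/
def det2 (u v : ℝ × ℝ) : ℝ := u.1 * v.2 - u.2 * v.1

/-- `b₁,…,b_N` are ordered clockwise projectively. -/
def ClockwiseOrdered {N : ℕ} (b : Fin N → ℝ × ℝ) : Prop :=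
  ∀ j k : Fin N, j < k →
    ((b j).2 = 0 → (b k).2 = 0) ∧
    ((b j).2 ≠ 0 → (b k).2 ≠ 0 → -(b j).1 / (b j).2 ≥ -(b k).1 / (b k).2)

/-- A nonzero vector `v ∈ ℝ²` is *upper* if `v₂ > 0` or (`v₂ = 0` and `v₁ > 0`). -/
def IsUpper (v : ℝ × ℝ) : Prop := 0 < v.2 ∨ (v.2 = 0 ∧ 0 < v.1)

def ClockwisePrecedes (u v : ℝ × ℝ) : Prop :=
  (u.2 = 0 → v.2 = 0) ∧ (u.2 ≠ 0 → v.2 ≠ 0 → -u.1 / u.2 ≥ -v.1 / v.2)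

lemma isUpper_iff_of_snd_ne_zero {v : ℝ × ℝ} (hv : v.2 ≠ 0) : IsUpper v ↔ 0 < v.2 := by
  simp [IsUpper, hv]

lemma isUpper_iff_of_snd_eq_zero {v : ℝ × ℝ} (hv : v.2 = 0) : IsUpper v ↔ 0 < v.1 := by
  simp [IsUpper, hv]

lemma det2_eq_mul_sub_div {u v : ℝ × ℝ} (hu : u.2 ≠ 0) (hv : v.2 ≠ 0) :
    det2 u v = u.2 * v.2 * (u.1 / u.2 - v.1 / v.2) := by
  simp only [det2]
  field_simp

lemma ClockwisePrecedes.det2_sign {u v : ℝ × ℝ} (h : ClockwisePrecedes u v) :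
    ((IsUpper u ↔ IsUpper v) → det2 u v ≤ 0) ∧ (¬(IsUpper u ↔ IsUpper v) → 0 ≤ det2 u v) := by
  obtain ⟨hzero, hslope⟩ := h
  by_cases hu : u.2 = 0
  · have hdet : det2 u v = 0 := by simp [det2, hu, hzero hu]
    simp [hdet]
  rw [isUpper_iff_of_snd_ne_zero hu]
  by_cases hv : v.2 = 0
  · have hdet : det2 u v = -(u.2 * v.1) := by simp [det2, hv]
    rw [isUpper_iff_of_snd_eq_zero hv, hdet]
    rcases lt_or_gt_of_ne hu with hneg | hpos
    · rw [iff_false_left hneg.not_gt, not_not]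
      exact ⟨fun h => by nlinarith [not_lt.mp h], fun h => by nlinarith⟩
    · rw [iff_true_left hpos]
      exact ⟨fun h => by nlinarith, fun h => by nlinarith [not_lt.mp h]⟩
  · have hdiff : u.1 / u.2 - v.1 / v.2 ≤ 0 := by
      linarith [hslope hu hv, neg_div u.2 u.1, neg_div v.2 v.1]
    have hsame : (0 < u.2 ↔ 0 < v.2) ↔ 0 < u.2 * v.2 := by
      rw [mul_pos_iff]
      grind
    rw [isUpper_iff_of_snd_ne_zero hv, hsame, det2_eq_mul_sub_div hu hv]
    exact ⟨fun h => mul_nonpos_of_nonneg_of_nonpos h.le hdiff,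
      fun h => mul_nonneg_of_nonpos_of_nonpos (not_lt.mp h) hdiff⟩

lemma max_zero_eq_ite_abs {d : ℝ} {P : Prop} [Decidable P] (hP : P → d ≤ 0) (hnP : ¬P → 0 ≤ d) :
    max d 0 = if P then 0 else |d| := by
  by_cases h : P
  · simp [h, hP h]
  · simp [h, hnP h, abs_of_nonneg]

open Classical in
theorem statement4_general {N : ℕ} (b : Fin N → ℝ × ℝ)
    (hcw : ClockwiseOrdered b) :
    ∑ j : Fin N, ∑ k ∈ Finset.Ioi j, max (det2 (b j) (b k)) 0 =
      ∑ j : Fin N, ∑ k ∈ Finset.Ioi j,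
        if (IsUpper (b j) ↔ IsUpper (b k)) then 0 else |det2 (b j) (b k)| := by
  refine sum_congr rfl fun j _ => sum_congr rfl fun k hk => ?_
  have hjk : ClockwisePrecedes (b j) (b k) := hcw j k (mem_Ioi.mp hk)
  exact max_zero_eq_ite_abs hjk.det2_sign.1 hjk.det2_sign.2

open Classical in
theorem statement4 {N : ℕ} (b : Fin N → ℝ × ℝ)
    (hnz : ∀ j, b j ≠ 0)
    (hcw : ClockwiseOrdered b) :
    ∑ j : Fin N, ∑ k ∈ Finset.Ioi j, max (det2 (b j) (b k)) 0 =
      ∑ j : Fin N, ∑ k ∈ Finset.Ioi j,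
        if (IsUpper (b j) ↔ IsUpper (b k)) then 0 else |det2 (b j) (b k)| :=
  statement4_general b hcw
end

section
/- Let b₁,…,b_N ∈ ℤ² be nonzero vectors. Let t ∈ ℝ be such that t > −b_{j1}/b_{j2} for every j with b_{j2} ≠ 0, and define the nonzero real numbers x₁(t) = ∏_{j=1}^N (b_{j1}+b_{j2}t)^{b_{j1}} and x₂(t) = ∏_{j=1}^N (b_{j1}+b_{j2}t)^{b_{j2}} (integer powers of nonzero reals). Define q₀ = π·( Σ_{j : b_{j2}<0} b_j + Σ_{j : b_{j2}=0, b_{j1}<0} b_j ) ∈ ℝ². Then arg(x₁(t)) ≡ q₀₁ (mod 2π) and arg(x₂(t)) ≡ q₀₂ (mod 2π), where arg(x) = 0 for x > 0 and arg(x) = π for x < 0; moreover 2q₀ ∈ 2πℤ², so q₀ ≡ −q₀ (mod 2πℤ²). -/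
open Finset
open scoped Real

/-- The argument of a nonzero real number: `0` for positive numbers, `π` for negative ones. -/
noncomputable def argReal (x : ℝ) : ℝ := if 0 < x then 0 else π

private lemma zpowSum {α : Type*} {x : ℝ} (hx : x ≠ 0) (s : Finset α) (c : α → ℤ) :
    x ^ (∑ j ∈ s, c j) = ∏ j ∈ s, x ^ c j := by
  induction s using Finset.cons_induction with
  | empty => simp
  | cons a s ha ih => simp [Finset.sum_cons, Finset.prod_cons, zpow_add₀ hx, ih]

private lemma sign_zpow (x : ℝ) (hx : x ≠ 0) (n : ℤ) :
    x ^ n = (if x < 0 then (-1:ℝ) ^ n else 1) * |x| ^ n := by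
  rcases hx.lt_or_gt with h | h
  · simp only [if_pos h, abs_of_neg h, ← mul_zpow]
    norm_num
  · simp [if_neg (not_lt.mpr h.le), abs_of_pos h]

private lemma key {N : ℕ} (f : Fin N → ℝ) (hf : ∀ j, f j ≠ 0) (c : Fin N → ℤ) :
    ∏ j, f j ^ c j = (-1:ℝ) ^ (∑ j ∈ univ.filter (fun j => f j < 0), c j) *
      ∏ j, |f j| ^ c j := by
  rw [zpowSum (by norm_num : (-1:ℝ) ≠ 0)]
  rw [Finset.prod_filter, ← Finset.prod_mul_distrib]
  exact Finset.prod_congr rfl fun j _ => sign_zpow (f j) (hf j) (c j)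

private lemma arg_of_sign {x : ℝ} {s : ℤ} (h : x = (-1:ℝ) ^ s * y) (hy : 0 < y) :
    ∃ m : ℤ, argReal x = π * s + 2 * π * m := by
  rcases Int.even_or_odd s with ⟨k, hk⟩ | ⟨k, hk⟩
  · have hx : 0 < x := by
      rw [h, Even.neg_one_zpow (⟨k, hk⟩ : Even s), one_mul]; exact hy
    refine ⟨-k, ?_⟩
    simp only [argReal, if_pos hx]
    push_cast [hk]; ring
  · have hx : x < 0 := by
      rw [h, Odd.neg_one_zpow (⟨k, hk⟩ : Odd s)]
      simpa using hy
    refine ⟨-k, ?_⟩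
    simp only [argReal, if_neg (not_lt.mpr hx.le)]
    push_cast [hk]; ring

theorem statement9 {N : ℕ} (b : Fin N → ℤ × ℤ)
    (hnz : ∀ j, b j ≠ 0)
    (t : ℝ)
    (ht : ∀ j, (b j).2 ≠ 0 → -((b j).1 : ℝ) / ((b j).2 : ℝ) < t)
    (x₁ x₂ : ℝ)
    (hx₁ : x₁ = ∏ j, (((b j).1 : ℝ) + ((b j).2 : ℝ) * t) ^ ((b j).1 : ℤ))
    (hx₂ : x₂ = ∏ j, (((b j).1 : ℝ) + ((b j).2 : ℝ) * t) ^ ((b j).2 : ℤ))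
    (sz : ℤ × ℤ)
    (hsz : sz = (∑ j ∈ Finset.univ.filter (fun j => (b j).2 < 0), b j) +
      ∑ j ∈ Finset.univ.filter (fun j => (b j).2 = 0 ∧ (b j).1 < 0), b j)
    (q₀ : ℝ × ℝ)
    (hq₀ : q₀ = (π * (sz.1 : ℝ), π * (sz.2 : ℝ))) :
    (∃ m : ℤ, argReal x₁ = q₀.1 + 2 * π * m) ∧
    (∃ m : ℤ, argReal x₂ = q₀.2 + 2 * π * m) ∧
    (∃ w : ℤ × ℤ, (2 : ℝ) • q₀ = (2 * π * w.1, 2 * π * w.2)) := by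
  set f : Fin N → ℝ := fun j => ((b j).1 : ℝ) + ((b j).2 : ℝ) * t with hf
  -- negativity characterization
  have hneg : ∀ j, f j < 0 ↔ ((b j).2 < 0 ∨ ((b j).2 = 0 ∧ (b j).1 < 0)) := by
    intro j
    have hfj : f j = ((b j).1 : ℝ) + ((b j).2 : ℝ) * t := rfl
    rw [hfj]
    rcases lt_trichotomy ((b j).2) 0 with h2 | h2 | h2
    · have h2' : ((b j).2 : ℝ) < 0 := by exact_mod_cast h2
      have := ht j (by omega)
      constructor
      · intro _; exact Or.inl h2
      · intro _
        have : -((b j).1 : ℝ) / ((b j).2 : ℝ) < t := ht j (by omega)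
        rw [div_lt_iff_of_neg h2'] at this
        nlinarith
    · have h1 : (b j).1 ≠ 0 := by
        intro h1; exact hnz j (Prod.ext h1 h2)
      constructor
      · intro hlt
        right
        refine ⟨h2, ?_⟩
        have : ((b j).1 : ℝ) < 0 := by
          simpa [h2] using hlt
        exact_mod_cast this
      · rintro (h | ⟨_, h1'⟩)
        · omega
        · have : ((b j).1 : ℝ) < 0 := by exact_mod_cast h1'
          simp [h2, this]
    · have h2' : (0:ℝ) < ((b j).2 : ℝ) := by exact_mod_cast h2
      have hlt : -((b j).1 : ℝ) / ((b j).2 : ℝ) < t := ht j (by omega)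
      rw [div_lt_iff₀ h2'] at hlt
      constructor
      · intro hc; nlinarith
      · rintro (h | ⟨h, _⟩) <;> omega
  have hfnz : ∀ j, f j ≠ 0 := by
    intro j hj
    rw [show f j = ((b j).1 : ℝ) + ((b j).2 : ℝ) * t from rfl] at hj
    rcases lt_trichotomy ((b j).2) 0 with h2 | h2 | h2
    · have : f j < 0 := (hneg j).mpr (Or.inl h2)
      rw [show f j = ((b j).1 : ℝ) + ((b j).2 : ℝ) * t from rfl] at this
      linarith
    · have h1 : (b j).1 ≠ 0 := fun h1 => hnz j (Prod.ext h1 h2)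
      have : ((b j).1 : ℝ) = 0 := by simpa [h2] using hj
      exact h1 (by exact_mod_cast this)
    · have h2' : (0:ℝ) < ((b j).2 : ℝ) := by exact_mod_cast h2
      have hlt : -((b j).1 : ℝ) / ((b j).2 : ℝ) < t := ht j (by omega)
      rw [div_lt_iff₀ h2'] at hlt
      nlinarith [hj.le, hj.ge]
  -- split the filter
  have hfilter : (univ.filter (fun j => f j < 0)) =
      (univ.filter (fun j : Fin N => (b j).2 < 0)) ∪
      (univ.filter (fun j : Fin N => (b j).2 = 0 ∧ (b j).1 < 0)) := by
    ext j
    simp [hneg j]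
  have hdisj : Disjoint (univ.filter (fun j : Fin N => (b j).2 < 0))
      (univ.filter (fun j : Fin N => (b j).2 = 0 ∧ (b j).1 < 0)) := by
    rw [Finset.disjoint_filter]
    rintro j _ h ⟨h0, _⟩; omega
  have hsum : ∀ c : Fin N → ℤ,
      (∑ j ∈ univ.filter (fun j => f j < 0), c j) =
        (∑ j ∈ univ.filter (fun j : Fin N => (b j).2 < 0), c j) +
        ∑ j ∈ univ.filter (fun j : Fin N => (b j).2 = 0 ∧ (b j).1 < 0), c j := by
    intro c
    rw [hfilter, Finset.sum_union hdisj]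
  have hpos : ∀ c : Fin N → ℤ, (0:ℝ) < ∏ j, |f j| ^ c j :=
    fun c => Finset.prod_pos fun j _ => zpow_pos (abs_pos.mpr (hfnz j)) _
  have hsz1 : sz.1 = ∑ j ∈ univ.filter (fun j => f j < 0), (b j).1 := by
    rw [hsum]; simp [hsz, Prod.fst_sum, Prod.snd_sum]
  have hsz2 : sz.2 = ∑ j ∈ univ.filter (fun j => f j < 0), (b j).2 := by
    rw [hsum]; simp [hsz, Prod.fst_sum, Prod.snd_sum]
  have h1 : x₁ = (-1:ℝ) ^ (sz.1) * ∏ j, |f j| ^ ((b j).1) := by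
    rw [hx₁, key f hfnz, hsz1]
  have h2 : x₂ = (-1:ℝ) ^ (sz.2) * ∏ j, |f j| ^ ((b j).2) := by
    rw [hx₂, key f hfnz, hsz2]
  refine ⟨?_, ?_, ⟨sz, ?_⟩⟩
  · rw [hq₀]; exact arg_of_sign h1 (hpos _)
  · rw [hq₀]; exact arg_of_sign h2 (hpos _)
  · rw [hq₀]
    simp [Prod.smul_def, smul_eq_mul]
    constructor <;> ring
end

section
/- Let b₁,…,b_N ∈ ℝ² be nonzero vectors, and define F(t) = (Σ_j b_{j1}·arg(b_{j1}+b_{j2}t), Σ_j b_{j2}·arg(b_{j1}+b_{j2}t)) for t ∈ ℂ with Im t ≠ 0, where arg is the principal argument. Then for every t with Im t > 0 one has F(conj(t)) + F(t) = 2πv₀, where v₀ = Σ_{j : b_{j2}=0, b_{j1}<0} b_j. In particular, the image of the lower half plane under F is the reflection of the image of the upper half plane through the point πv₀. -/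
open Finset
open scoped Real

lemma arg_key (t : ℂ) (ht : 0 < t.im) (b1 b2 : ℝ) (hnz : ¬(b1 = 0 ∧ b2 = 0)) :
    Complex.arg ((b1 : ℂ) + (b2 : ℂ) * (starRingEnd ℂ) t) +
      Complex.arg ((b1 : ℂ) + (b2 : ℂ) * t) =
    (if b2 = 0 ∧ b1 < 0 then (2 * π) else 0) := by
  have hconj : (b1 : ℂ) + (b2 : ℂ) * (starRingEnd ℂ) t
      = (starRingEnd ℂ) ((b1 : ℂ) + (b2 : ℂ) * t) := by
    simp [map_add, map_mul, Complex.conj_ofReal]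
  rw [hconj, Complex.arg_conj]
  by_cases hb2 : b2 = 0
  · subst hb2
    have hb1 : b1 ≠ 0 := fun h => hnz ⟨h, rfl⟩
    simp only [Complex.ofReal_zero, zero_mul, add_zero]
    rcases lt_or_gt_of_ne hb1 with h | h
    · rw [Complex.arg_ofReal_of_neg h]
      simp [h, Real.pi_ne_zero, two_mul]
    · rw [Complex.arg_ofReal_of_nonneg h.le]
      simp [not_lt.mpr h.le, Real.pi_ne_zero, Ne.symm Real.pi_ne_zero]
  · have him : ((b1 : ℂ) + (b2 : ℂ) * t).im ≠ 0 := by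
      simp only [Complex.add_im, Complex.ofReal_im, Complex.mul_im, Complex.ofReal_re,
        Complex.ofReal_im, zero_add, zero_mul, add_zero]
      exact mul_ne_zero hb2 ht.ne'
    have hne : Complex.arg ((b1 : ℂ) + (b2 : ℂ) * t) ≠ π := by
      intro h
      exact him (Complex.arg_eq_pi_iff.mp h).2
    simp [hne, hb2]

theorem statement11 {N : ℕ} (b : Fin N → ℝ × ℝ)
    (hnz : ∀ j, b j ≠ 0)
    (F : ℂ → ℝ × ℝ)
    (hF : ∀ t, F t = (∑ j, (b j).1 * Complex.arg (((b j).1 : ℂ) + ((b j).2 : ℂ) * t),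
      ∑ j, (b j).2 * Complex.arg (((b j).1 : ℂ) + ((b j).2 : ℂ) * t)))
    (v₀ : ℝ × ℝ)
    (hv₀ : v₀ = ∑ j ∈ Finset.univ.filter (fun j => (b j).2 = 0 ∧ (b j).1 < 0), b j) :
    (∀ t : ℂ, 0 < t.im → F ((starRingEnd ℂ) t) + F t = (2 * π) • v₀) ∧
    F '' {t : ℂ | t.im < 0} = (fun y => (2 * π) • v₀ - y) '' (F '' {t : ℂ | 0 < t.im}) := by
  have key : ∀ t : ℂ, 0 < t.im → F ((starRingEnd ℂ) t) + F t = (2 * π) • v₀ := by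
    intro t ht
    have hj : ∀ j : Fin N,
        Complex.arg (((b j).1 : ℂ) + ((b j).2 : ℂ) * (starRingEnd ℂ) t) +
          Complex.arg (((b j).1 : ℂ) + ((b j).2 : ℂ) * t) =
        (if (b j).2 = 0 ∧ (b j).1 < 0 then (2 * π) else 0) := by
      intro j
      refine arg_key t ht _ _ ?_
      intro h
      exact hnz j (Prod.ext h.1 h.2)
    rw [hF, hF, hv₀, Prod.smul_def, Prod.mk_add_mk, Prod.mk.injEq]
    constructor
    · rw [← Finset.sum_add_distrib, Prod.fst_sum, smul_eq_mul, Finset.mul_sum, Finset.sum_filter]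
      refine Finset.sum_congr rfl fun j _ => ?_
      rw [← mul_add, hj j, mul_ite, mul_zero, mul_comm]
    · rw [← Finset.sum_add_distrib, Prod.snd_sum, smul_eq_mul, Finset.mul_sum, Finset.sum_filter]
      refine Finset.sum_congr rfl fun j _ => ?_
      rw [← mul_add, hj j, mul_ite, mul_zero, mul_comm]
  refine ⟨key, ?_⟩
  ext y
  constructor
  · rintro ⟨t, ht, rfl⟩
    simp only [Set.mem_setOf_eq] at ht
    refine ⟨F ((starRingEnd ℂ) t), ⟨(starRingEnd ℂ) t, ?_, rfl⟩, ?_⟩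
    · simpa using neg_pos.mpr ht
    · have := key ((starRingEnd ℂ) t) (by simpa using neg_pos.mpr ht)
      rw [Complex.conj_conj] at this
      simp only
      rw [← this]; abel
  · rintro ⟨y', ⟨s, hs, rfl⟩, rfl⟩
    refine ⟨(starRingEnd ℂ) s, by simpa using hs, ?_⟩
    have := key s hs
    simp only
    rw [← this]; abel
end

section
/- Let b₁,…,b_N ∈ ℝ² satisfy b₁+⋯+b_N = 0, with b_{12} ≠ 0 and B_{k1} := det(b_k, b₁) ≠ 0 for all k ≠ 1. For δ > 0 and θ ∈ [0,π] define r_δ(θ) ∈ ℝ² by its coordinates r_δ(θ)_i = Σ_{k=2}^N b_{ki}·arg(1 + b_{k2}b_{12}δe^{iθ}/B_{k1}), i = 1,2, where arg is the principal argument. Then: (a) there exists δ₀ > 0 such that r_δ(0) = r_δ(π) = (0,0) for all 0 < δ < δ₀; and (b) there exists a constant C > 0 such that |det(b₁, r_δ(θ)) − b_{12}²·δ·sin θ| ≤ Cδ² for all θ ∈ [0,π] and all 0 < δ < δ₀. In particular, det(b₁, r_δ(θ)) > 0 for all 0 < θ < π and all sufficiently small δ > 0. -/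
/-!
Write `c_k = b_{k2} b_{12} / B_{k1}`, so that `r_δ(θ) = ∑_{k ≥ 2} arg (1 + c_k δ e^{iθ}) b_k`.
For `|a| ≤ 1/2` the point `1 + a e^{iθ}` has real part at least `1/2`, so its argument is
`arctan (a sin θ / (1 + a cos θ)) = a sin θ + O(a² |sin θ|)`, using `|arctan u - u| ≤ |u|³`.
Summing against the weights `det(b₁, b_k) = -B_{k1}` gives
`det(b₁, r_δ(θ)) = (∑_k det(b₁, b_k) c_k) δ sin θ + O(δ² sin θ)`, and the leading coefficient is
`-b_{12} ∑_{k ≥ 2} b_{k2} = b_{12}²` because the `b_k` sum to zero. Since the error carries the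
factor `sin θ` as well, it vanishes at `θ = 0, π` and is dominated by the main term for small `δ`.
-/

open Finset
open scoped Real

theorem Real.abs_arctan_sub_self_le (u : ℝ) : |Real.arctan u - u| ≤ |u| ^ 3 := by
  have hderiv : ∀ x ∈ Set.Icc (-|u|) |u|,
      HasDerivWithinAt (fun x => Real.arctan x - x) (1 / (1 + x ^ 2) - 1) (Set.Icc (-|u|) |u|) x :=
    fun x _ => ((Real.hasDerivAt_arctan x).sub (hasDerivAt_id x)).hasDerivWithinAt
  have hbound : ∀ x ∈ Set.Icc (-|u|) |u|, ‖1 / (1 + x ^ 2) - 1‖ ≤ |u| ^ 2 := by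
    intro x hx
    have : 1 / (1 + x ^ 2) - 1 = -(x ^ 2 / (1 + x ^ 2)) := by field_simp; ring
    rw [this, Real.norm_eq_abs, abs_neg, abs_of_nonneg (by positivity)]
    exact (div_le_self (sq_nonneg x) (by nlinarith [sq_nonneg x])).trans (sq_le_sq' hx.1 hx.2)
  have := (convex_Icc (-|u|) |u|).norm_image_sub_le_of_norm_hasDerivWithin_le hderiv hbound
    ⟨neg_nonpos.2 (abs_nonneg u), abs_nonneg u⟩ ⟨neg_abs_le u, le_abs_self u⟩
  simpa [Real.arctan_zero, pow_succ] using this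

theorem Complex.arg_eq_arctan_of_re_pos {z : ℂ} (hz : 0 < z.re) :
    Complex.arg z = Real.arctan (z.im / z.re) := by
  have h := abs_lt.1 (Complex.abs_arg_lt_pi_div_two_iff.2 (Or.inl hz))
  rw [← Complex.tan_arg, Real.arctan_tan h.1 h.2]

open Complex in
theorem abs_arg_one_add_mul_exp_sub_le {a : ℝ} (ha : |a| ≤ 1 / 2) (θ : ℝ) :
    |arg (1 + a * exp (θ * I)) - a * Real.sin θ| ≤ 6 * a ^ 2 * |Real.sin θ| := by
  set s := Real.sin θ
  set x := 1 + a * Real.cos θ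
  have hacos : |a * Real.cos θ| ≤ |a| := by
    rw [abs_mul]; exact mul_le_of_le_one_right (abs_nonneg a) (Real.abs_cos_le_one θ)
  have hx : 1 / 2 ≤ x := by linarith [neg_abs_le (a * Real.cos θ)]
  have hx0 : 0 < x := by linarith
  have harg : arg (1 + a * exp (θ * I)) = Real.arctan (a * s / x) := by
    have hre : (1 + a * exp (θ * I)).re = x := by simp [x, exp_ofReal_mul_I_re]
    have him : (1 + a * exp (θ * I)).im = a * s := by simp [s, exp_ofReal_mul_I_im]
    rw [arg_eq_arctan_of_re_pos (hre ▸ hx0), hre, him]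
  set u := a * s / x
  have hu : |u| ≤ 2 * |a| * |s| := by
    rw [abs_div, abs_of_pos hx0, abs_mul, div_le_iff₀ hx0]
    nlinarith [mul_nonneg (abs_nonneg a) (abs_nonneg s)]
  have hcubic : |u| ^ 3 ≤ 4 * a ^ 2 * |s| := by
    have hs : |s| ≤ 1 := Real.abs_sin_le_one θ
    calc |u| ^ 3 ≤ (2 * |a| * |s|) ^ 3 := pow_le_pow_left₀ (abs_nonneg u) hu 3
      _ = 4 * a ^ 2 * |s| * (2 * |a| * |s| ^ 2) := by rw [← sq_abs a]; ring
      _ ≤ 4 * a ^ 2 * |s| * 1 := by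
          gcongr
          nlinarith [abs_nonneg s, abs_nonneg a, mul_le_mul hs hs (abs_nonneg s) zero_le_one]
      _ = 4 * a ^ 2 * |s| := mul_one _
  have hlinear : |u - a * s| ≤ 2 * a ^ 2 * |s| := by
    have : u - a * s = -(a * s * (a * Real.cos θ)) / x := by
      rw [eq_div_iff hx0.ne', sub_mul, div_mul_cancel₀ _ hx0.ne']; ring
    rw [this, abs_div, abs_neg, abs_of_pos hx0, div_le_iff₀ hx0, abs_mul, abs_mul]
    calc |a| * |s| * |a * Real.cos θ| ≤ |a| * |s| * |a| := by gcongr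
      _ = a ^ 2 * |s| * 1 := by rw [← sq_abs a]; ring
      _ ≤ 2 * a ^ 2 * |s| * x := by nlinarith [mul_nonneg (sq_nonneg a) (abs_nonneg s)]
  calc |arg (1 + a * exp (θ * I)) - a * s| ≤ |Real.arctan u - u| + |u - a * s| := by
        rw [harg]; exact abs_sub_le _ _ _
    _ ≤ 6 * a ^ 2 * |s| := by linarith [Real.abs_arctan_sub_self_le u]

open Complex in
theorem abs_sum_mul_arg_sub_le {ι : Type*} (S : Finset ι) (w a : ι → ℝ) (θ : ℝ)
    (ha : ∀ k ∈ S, |a k| ≤ 1 / 2) :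
    |∑ k ∈ S, w k * arg (1 + a k * exp (θ * I)) - (∑ k ∈ S, w k * a k) * Real.sin θ|
      ≤ (∑ k ∈ S, 6 * |w k| * a k ^ 2) * |Real.sin θ| := by
  rw [sum_mul, sum_mul, ← sum_sub_distrib]
  refine (abs_sum_le_sum_abs _ _).trans (sum_le_sum fun k hk => ?_)
  calc |w k * arg (1 + a k * exp (θ * I)) - w k * a k * Real.sin θ|
      = |w k| * |arg (1 + a k * exp (θ * I)) - a k * Real.sin θ| := by rw [← abs_mul]; ring_nf
    _ ≤ |w k| * (6 * a k ^ 2 * |Real.sin θ|) := by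
        gcongr; exact abs_arg_one_add_mul_exp_sub_le (ha k hk) θ
    _ = 6 * |w k| * a k ^ 2 * |Real.sin θ| := by ring

theorem Finset.exists_pos_forall_abs_mul_le {ι : Type*} (S : Finset ι) (c : ι → ℝ) {ε : ℝ}
    (hε : 0 < ε) : ∃ δ₀ > 0, ∀ δ : ℝ, |δ| < δ₀ → ∀ k ∈ S, |c k * δ| ≤ ε := by
  have : ∀ᶠ δ in nhds (0 : ℝ), ∀ k ∈ S, |c k * δ| ≤ ε := by
    refine (Filter.eventually_all_finset S).2 fun k _ => ?_
    have : Filter.Tendsto (fun δ => |c k * δ|) (nhds 0) (nhds 0) := by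
      simpa using (continuous_const.mul continuous_id).abs.tendsto (0 : ℝ)
    exact this.eventually (ge_mem_nhds hε)
  simpa only [Metric.eventually_nhds_iff, Real.dist_eq, sub_zero] using this

theorem det2_sum_smul_right {ι : Type*} (u : ℝ × ℝ) (S : Finset ι) (t : ι → ℝ)
    (v : ι → ℝ × ℝ) : det2 u (∑ k ∈ S, t k • v k) = ∑ k ∈ S, t k * det2 u (v k) := by
  simp only [det2, Prod.fst_sum, Prod.snd_sum, Prod.smul_fst, Prod.smul_snd, smul_eq_mul,
    mul_sum, ← sum_sub_distrib]
  exact sum_congr rfl fun k _ => by ring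

section Remainder

variable {N : ℕ} (b : Fin (N + 1) → ℝ × ℝ)

noncomputable def edgeCoeff (k : Fin (N + 1)) : ℝ := (b k).2 * (b 0).2 / det2 (b k) (b 0)

noncomputable def edgeRemainder (δ θ : ℝ) : ℝ × ℝ :=
  ∑ k ∈ univ.erase 0,
    Complex.arg (1 + ((edgeCoeff b k * δ : ℝ) : ℂ) * Complex.exp (θ * Complex.I)) • b k

theorem edgeRemainder_apply (δ θ : ℝ) : edgeRemainder b δ θ =
    (∑ k ∈ univ.erase (0 : Fin (N + 1)), (b k).1 *
        Complex.arg (1 + (((b k).2 * (b 0).2 * δ : ℝ) : ℂ) * Complex.exp (θ * Complex.I) /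
          ((det2 (b k) (b 0) : ℝ) : ℂ)),
      ∑ k ∈ univ.erase (0 : Fin (N + 1)), (b k).2 *
        Complex.arg (1 + (((b k).2 * (b 0).2 * δ : ℝ) : ℂ) * Complex.exp (θ * Complex.I) /
          ((det2 (b k) (b 0) : ℝ) : ℂ))) := by
  have harg : ∀ k, 1 + (((b k).2 * (b 0).2 * δ : ℝ) : ℂ) * Complex.exp (θ * Complex.I) /
      ((det2 (b k) (b 0) : ℝ) : ℂ) =
        1 + ((edgeCoeff b k * δ : ℝ) : ℂ) * Complex.exp (θ * Complex.I) := by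
    intro k; simp only [edgeCoeff]; push_cast; ring
  simp_rw [harg]
  ext <;> simp only [edgeRemainder, Prod.fst_sum, Prod.snd_sum, Prod.smul_fst, Prod.smul_snd,
    smul_eq_mul, mul_comm]

variable {b}

theorem edgeRemainder_eq_zero {δ θ : ℝ}
    (hδ : ∀ k ∈ univ.erase (0 : Fin (N + 1)), |edgeCoeff b k * δ| ≤ 1 / 2)
    (hθ : Real.sin θ = 0) : edgeRemainder b δ θ = 0 :=
  sum_eq_zero fun k hk => by
    have := abs_arg_one_add_mul_exp_sub_le (hδ k hk) θ
    rw [hθ, mul_zero, abs_zero, mul_zero, sub_zero, abs_nonpos_iff] at this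
    rw [this, zero_smul]

theorem sum_det2_mul_edgeCoeff (hsum : ∑ j, b j = 0)
    (hB : ∀ k : Fin (N + 1), k ≠ 0 → det2 (b k) (b 0) ≠ 0) :
    ∑ k ∈ univ.erase 0, det2 (b 0) (b k) * edgeCoeff b k = (b 0).2 ^ 2 := by
  have hsnd : ∑ k ∈ univ.erase 0, (b k).2 = -(b 0).2 := by
    rw [← Prod.snd_sum, sum_erase_eq_sub (mem_univ 0), hsum, zero_sub, Prod.snd_neg]
  calc ∑ k ∈ univ.erase 0, det2 (b 0) (b k) * edgeCoeff b k
      = ∑ k ∈ univ.erase 0, -(b 0).2 * (b k).2 := by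
        refine sum_congr rfl fun k hk => ?_
        have := hB k (ne_of_mem_erase hk)
        simp only [edgeCoeff]; field_simp; simp only [det2]; ring
    _ = (b 0).2 ^ 2 := by rw [← mul_sum, hsnd]; ring

theorem abs_det2_edgeRemainder_sub_le (hsum : ∑ j, b j = 0)
    (hB : ∀ k : Fin (N + 1), k ≠ 0 → det2 (b k) (b 0) ≠ 0) {δ : ℝ}
    (hδ : ∀ k ∈ univ.erase (0 : Fin (N + 1)), |edgeCoeff b k * δ| ≤ 1 / 2) (θ : ℝ) :
    |det2 (b 0) (edgeRemainder b δ θ) - (b 0).2 ^ 2 * δ * Real.sin θ|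
      ≤ (∑ k ∈ univ.erase 0, 6 * |det2 (b 0) (b k)| * edgeCoeff b k ^ 2) * δ ^ 2
        * |Real.sin θ| := by
  have := abs_sum_mul_arg_sub_le _ (fun k => det2 (b 0) (b k)) (fun k => edgeCoeff b k * δ) θ hδ
  simp only [← mul_assoc, ← sum_mul, sum_det2_mul_edgeCoeff hsum hB, mul_pow] at this
  rwa [edgeRemainder, det2_sum_smul_right, sum_congr rfl fun k _ => mul_comm _ _]

end Remainder

theorem statement12 {N : ℕ} (b : Fin (N + 1) → ℝ × ℝ)
    (hsum : ∑ j, b j = 0)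
    (hb12 : (b 0).2 ≠ 0)
    (hB : ∀ k : Fin (N + 1), k ≠ 0 → det2 (b k) (b 0) ≠ 0)
    (r : ℝ → ℝ → ℝ × ℝ)
    (hr : ∀ δ θ, r δ θ =
      (∑ k ∈ Finset.univ.erase (0 : Fin (N + 1)), (b k).1 *
        Complex.arg (1 + (((b k).2 * (b 0).2 * δ : ℝ) : ℂ) * Complex.exp (θ * Complex.I) /
          ((det2 (b k) (b 0) : ℝ) : ℂ)),
       ∑ k ∈ Finset.univ.erase (0 : Fin (N + 1)), (b k).2 *
        Complex.arg (1 + (((b k).2 * (b 0).2 * δ : ℝ) : ℂ) * Complex.exp (θ * Complex.I) /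
          ((det2 (b k) (b 0) : ℝ) : ℂ)))) :
    (∃ δ₀ > (0 : ℝ),
      (∀ δ : ℝ, 0 < δ → δ < δ₀ → r δ 0 = 0 ∧ r δ π = 0) ∧
      (∃ C > (0 : ℝ), ∀ θ ∈ Set.Icc (0 : ℝ) π, ∀ δ : ℝ, 0 < δ → δ < δ₀ →
        |det2 (b 0) (r δ θ) - (b 0).2 ^ 2 * δ * Real.sin θ| ≤ C * δ ^ 2)) ∧
    (∃ δ₁ > (0 : ℝ), ∀ δ : ℝ, 0 < δ → δ < δ₁ → ∀ θ : ℝ, 0 < θ → θ < π →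
      0 < det2 (b 0) (r δ θ)) := by
  obtain rfl : r = edgeRemainder b :=
    funext₂ fun δ θ => (hr δ θ).trans (edgeRemainder_apply b δ θ).symm
  obtain ⟨δ₀, hδ₀, hsmall⟩ := (univ.erase 0).exists_pos_forall_abs_mul_le (edgeCoeff b)
    (by norm_num : (0 : ℝ) < 1 / 2)
  replace hsmall : ∀ δ, 0 < δ → δ < δ₀ → ∀ k ∈ univ.erase 0, |edgeCoeff b k * δ| ≤ 1 / 2 :=
    fun δ hδ hδ₀' =>
      hsmall δ (by rwa [abs_of_pos hδ])
  set C := ∑ k ∈ univ.erase 0, 6 * |det2 (b 0) (b k)| * edgeCoeff b k ^ 2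
  have hC : 0 ≤ C := sum_nonneg fun k _ => by positivity
  have hest δ hδ hδ₀' := abs_det2_edgeRemainder_sub_le hsum hB (hsmall δ hδ hδ₀')
  refine ⟨⟨δ₀, hδ₀, fun δ hδ hδ₀' => ⟨edgeRemainder_eq_zero (hsmall δ hδ hδ₀') Real.sin_zero,
    edgeRemainder_eq_zero (hsmall δ hδ hδ₀') Real.sin_pi⟩, C + 1, by positivity,
    fun θ _ δ hδ hδ₀' => ?_⟩, min δ₀ ((b 0).2 ^ 2 / (C + 1)), lt_min hδ₀ (by positivity),
    fun δ hδ hδ₁ θ hθ₀ hθπ => ?_⟩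
  · calc _ ≤ C * δ ^ 2 * |Real.sin θ| := hest δ hδ hδ₀' θ
      _ ≤ C * δ ^ 2 * 1 := by gcongr; exact Real.abs_sin_le_one θ
      _ ≤ (C + 1) * δ ^ 2 := by nlinarith
  · have hsin : 0 < Real.sin θ := Real.sin_pos_of_pos_of_lt_pi hθ₀ hθπ
    have hCδ : C * δ < (b 0).2 ^ 2 := by
      have := (lt_div_iff₀ (by positivity)).1 (hδ₁.trans_le (min_le_right _ _))
      nlinarith
    have := abs_le.1 (hest δ hδ (hδ₁.trans_le (min_le_left _ _)) θ)
    rw [abs_of_pos hsin] at this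
    nlinarith [mul_pos (mul_pos hδ hsin) (sub_pos.2 hCδ)]
end

section
/- Let N ≥ 3 and let b₁,…,b_N ∈ ℤ² be nonzero vectors with b₁+⋯+b_N = 0, whose 2×2 minors det(b_j,b_k) (j < k) have greatest common divisor 1, and which are ordered clockwise projectively. Then Σ_{1≤j<k≤N} det⁺(b_j,b_k) is a positive even integer; equivalently, m_B := (1/2)·Σ_{1≤j<k≤N} det⁺(b_j,b_k) is a positive integer. -/
open Finset

/-- Triangle decomposition of a full double sum when the diagonal vanishes. -/
private lemma tri_sum {N : ℕ} (G : Fin N → Fin N → ℤ) (hdiag : ∀ i, G i i = 0) :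
    ∑ i, ∑ k, G k i = ∑ i, ∑ k ∈ Ioi i, (G k i + G i k) := by
  have h1 : ∀ i : Fin N, ∑ k, G k i = ∑ k ∈ Ioi i, G k i + ∑ k ∈ Iio i, G k i := by
    intro i
    have d1 : Disjoint (Ioi i) (Iio i) := by
      rw [Finset.disjoint_left]; intro a ha hb
      simp only [mem_Ioi] at ha; simp only [mem_Iio] at hb; omega
    have d2 : Disjoint (Ioi i ∪ Iio i) ({i} : Finset (Fin N)) := by
      rw [Finset.disjoint_right]; intro a ha hb
      simp only [mem_singleton] at ha; simp only [mem_union, mem_Ioi, mem_Iio] at hb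
      subst ha; omega
    have huniv : (Finset.univ : Finset (Fin N)) = (Ioi i ∪ Iio i) ∪ {i} := by
      ext k; simp only [mem_univ, mem_union, mem_Ioi, mem_Iio, mem_singleton, true_iff]
      omega
    rw [huniv, Finset.sum_union d2, Finset.sum_union d1, Finset.sum_singleton, hdiag, add_zero]
  have h2 : ∑ i : Fin N, ∑ k ∈ Iio i, G k i = ∑ i : Fin N, ∑ k ∈ Ioi i, G i k := by
    refine Finset.sum_comm' ?_
    intro a c
    simp only [mem_univ, mem_Iio, mem_Ioi, true_and, and_true]
  calc ∑ i, ∑ k, G k i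
      = ∑ i : Fin N, (∑ k ∈ Ioi i, G k i + ∑ k ∈ Iio i, G k i) :=
        Finset.sum_congr rfl fun i _ => h1 i
    _ = (∑ i : Fin N, ∑ k ∈ Ioi i, G k i) + ∑ i : Fin N, ∑ k ∈ Iio i, G k i :=
        Finset.sum_add_distrib
    _ = (∑ i : Fin N, ∑ k ∈ Ioi i, G k i) + ∑ i : Fin N, ∑ k ∈ Ioi i, G i k := by rw [h2]
    _ = ∑ i, ∑ k ∈ Ioi i, (G k i + G i k) := by
        rw [← Finset.sum_add_distrib]
        exact Finset.sum_congr rfl fun i _ => Finset.sum_add_distrib.symm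

private lemma aux {N : ℕ} (x y : Fin N → ℤ)
    (hsx : ∑ j, x j = 0) (hsy : ∑ j, y j = 0)
    (hex : ∃ j k : Fin N, j < k ∧ x j * y k - y j * x k ≠ 0)
    (hord : ∀ j k : Fin N, j < k → y j = 0 → y k = 0)
    (hslope : ∀ j k : Fin N, j < k → y j ≠ 0 → y k ≠ 0 →
      -(x j : ℝ) / (y j : ℝ) ≥ -(x k : ℝ) / (y k : ℝ)) :
    0 < ∑ j, ∑ k ∈ Ioi j, max (x j * y k - y j * x k) 0 ∧
    2 ∣ ∑ j, ∑ k ∈ Ioi j, max (x j * y k - y j * x k) 0 := by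
  -- sign lemmas
  have key : ∀ j k : Fin N, y j ≠ 0 → y k ≠ 0 →
      ((x j * y k - y j * x k : ℤ) : ℝ) =
        (y j : ℝ) * (y k : ℝ) * ((-(x k : ℝ)/(y k : ℝ)) - (-(x j : ℝ)/(y j : ℝ))) := by
    intro j k hj hk
    have hj' : (y j : ℝ) ≠ 0 := Int.cast_ne_zero.mpr hj
    have hk' : (y k : ℝ) ≠ 0 := Int.cast_ne_zero.mpr hk
    push_cast
    field_simp
    ring
  have hsign : ∀ j k : Fin N, j < k → 0 < y j * y k → x j * y k - y j * x k ≤ 0 := by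
    intro j k hjk hpos
    have hj : y j ≠ 0 := fun h => by simp [h] at hpos
    have hk : y k ≠ 0 := fun h => by simp [h] at hpos
    have hs := hslope j k hjk hj hk
    have ht : (-(x k : ℝ)/(y k : ℝ)) - (-(x j : ℝ)/(y j : ℝ)) ≤ 0 := by linarith
    have hp : (0:ℝ) < (y j : ℝ) * (y k : ℝ) := by exact_mod_cast hpos
    have h1 : ((x j * y k - y j * x k : ℤ) : ℝ) ≤ 0 := by
      rw [key j k hj hk]; nlinarith
    exact_mod_cast h1
  have hsign2 : ∀ j k : Fin N, j < k → y j * y k < 0 → 0 ≤ x j * y k - y j * x k := by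
    intro j k hjk hneg
    have hj : y j ≠ 0 := fun h => by simp [h] at hneg
    have hk : y k ≠ 0 := fun h => by simp [h] at hneg
    have hs := hslope j k hjk hj hk
    have ht : (-(x k : ℝ)/(y k : ℝ)) - (-(x j : ℝ)/(y j : ℝ)) ≤ 0 := by linarith
    have hp : (y j : ℝ) * (y k : ℝ) < 0 := by exact_mod_cast hneg
    have h1 : (0:ℝ) ≤ ((x j * y k - y j * x k : ℤ) : ℝ) := by
      rw [key j k hj hk]; nlinarith
    exact_mod_cast h1
  constructor
  · -- positivity
    by_contra hS
    push_neg at hS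
    have hnn : (0:ℤ) ≤ ∑ j, ∑ k ∈ Ioi j, max (x j * y k - y j * x k) 0 :=
      Finset.sum_nonneg fun j _ => Finset.sum_nonneg fun k _ => le_max_right _ _
    have hS0 : ∑ j, ∑ k ∈ Ioi j, max (x j * y k - y j * x k) 0 = 0 := le_antisymm hS hnn
    have h0 : ∀ j k : Fin N, j < k → x j * y k - y j * x k ≤ 0 := by
      intro j k hjk
      have h1 := (Finset.sum_eq_zero_iff_of_nonneg
        (fun j _ => Finset.sum_nonneg fun k _ => le_max_right _ _)).mp hS0 j (mem_univ j)
      have h2 := (Finset.sum_eq_zero_iff_of_nonneg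
        (fun k _ => le_max_right _ _)).mp h1 k (mem_Ioi.mpr hjk)
      exact max_eq_right_iff.mp h2
    obtain ⟨j, k, hjk, hne⟩ := hex
    apply hne
    by_cases hall : ∀ i, y i = 0
    · simp [hall j, hall k]
    · push_neg at hall
      obtain ⟨i₀, hi₀⟩ := hall
      have hP : ∃ u, 0 < y u := by
        by_contra hc
        push_neg at hc
        exact hi₀ ((Finset.sum_eq_zero_iff_of_nonpos (fun i _ => hc i)).mp hsy i₀ (mem_univ i₀))
      have hM : ∃ v, y v < 0 := by
        by_contra hc
        push_neg at hc
        exact hi₀ ((Finset.sum_eq_zero_iff_of_nonneg (fun i _ => hc i)).mp hsy i₀ (mem_univ i₀))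
      obtain ⟨u, hu⟩ := hP
      obtain ⟨v, hv⟩ := hM
      have hpar : ∀ a c : Fin N, 0 < y a → y c < 0 → x a * y c - y a * x c = 0 := by
        intro a c ha hc
        rcases lt_trichotomy a c with h | h | h
        · exact le_antisymm (h0 a c h) (hsign2 a c h (mul_neg_of_pos_of_neg ha hc))
        · subst h; omega
        · have h1 := h0 c a h
          have h2 := hsign2 c a h (mul_neg_of_neg_of_pos hc ha)
          have h3 : x c * y a - y c * x a = 0 := le_antisymm h1 h2
          linear_combination -h3
      have hzero : ∀ m : Fin N, y m = 0 → x m = 0 := by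
        intro m hm
        have hum : u < m := by
          rcases lt_trichotomy u m with h | h | h
          · exact h
          · subst h; omega
          · have := hord m u h hm; omega
        have hvm : v < m := by
          rcases lt_trichotomy v m with h | h | h
          · exact h
          · subst h; omega
          · have := hord m v h hm; omega
        have h1 := h0 u m hum
        have h2 := h0 v m hvm
        rw [hm] at h1 h2
        have hk1 : x m ≤ 0 := by nlinarith
        have hk2 : 0 ≤ x m := by nlinarith
        omega
      rcases lt_trichotomy (y j) 0 with hyj | hyj | hyj
      · rcases lt_trichotomy (y k) 0 with hyk | hyk | hyk
        · have e1 := hpar u j hu hyj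
          have e2 := hpar u k hu hyk
          have h3 : (x j * y k - y j * x k) * y u = 0 := by
            linear_combination y j * e2 - y k * e1
          exact (mul_eq_zero.mp h3).resolve_right (by omega)
        · simp [hyk, hzero k hyk]
        · have h3 := hpar k j hyk hyj
          linear_combination -h3
      · have hk0 := hord j k hjk hyj
        simp [hyj, hk0]
      · rcases lt_trichotomy (y k) 0 with hyk | hyk | hyk
        · exact hpar j k hyj hyk
        · simp [hyk, hzero k hyk]
        · have e1 := hpar j v hyj hv
          have e2 := hpar k v hyk hv
          have h3 : (x j * y k - y j * x k) * y v = 0 := by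
            linear_combination y k * e1 - y j * e2
          exact (mul_eq_zero.mp h3).resolve_right (by omega)
  · -- evenness
    set G : Fin N → Fin N → ℤ := fun j k =>
      (if 0 < y j then x j else 0) * (if y k < 0 then y k else 0)
      + (if y j < 0 then x j else 0) * (if 0 < y k then y k else 0)
      + (if 0 < y j then y j else 0) * (if y k = 0 ∧ x k < 0 then x k else 0)
      + (if y j < 0 then y j else 0) * (if y k = 0 ∧ 0 < x k then x k else 0) with hG
    have hGdiag : ∀ i, G i i = 0 := by
      intro i
      rcases lt_trichotomy (y i) 0 with h | h | h
      · simp [hG, h, not_lt_of_gt h, h.ne]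
      · simp [hG, h]
      · simp [hG, h, not_lt_of_gt h, h.ne']
    have hterm : ∀ j k : Fin N, j < k →
        2 ∣ max (x j * y k - y j * x k) 0 - (G k j + G j k) := by
      intro j k hjk
      rcases lt_trichotomy (y j) 0 with hyj | hyj | hyj
      · rcases lt_trichotomy (y k) 0 with hyk | hyk | hyk
        · -- y j < 0, y k < 0
          have hd : x j * y k - y j * x k ≤ 0 :=
            hsign j k hjk (mul_pos_of_neg_of_neg hyj hyk)
          have g1 : G j k = 0 := by
            simp [hG, hyj, hyk, not_lt_of_gt hyj, not_lt_of_gt hyk, hyj.ne, hyk.ne]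
          have g2 : G k j = 0 := by
            simp [hG, hyj, hyk, not_lt_of_gt hyj, not_lt_of_gt hyk, hyj.ne, hyk.ne]
          rw [g1, g2, max_eq_right hd]
          norm_num
        · -- y j < 0, y k = 0
          have g2 : G k j = 0 := by simp [hG, hyk]
          rcases lt_trichotomy (x k) 0 with hxk | hxk | hxk
          · have hd : x j * y k - y j * x k ≤ 0 := by rw [hyk]; nlinarith
            have g1 : G j k = 0 := by
              simp [hG, hyj, hyk, hxk, not_lt_of_gt hyj, hyj.ne, not_lt_of_gt hxk]
            rw [g1, g2, max_eq_right hd]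
            norm_num
          · have hd : x j * y k - y j * x k ≤ 0 := by rw [hyk, hxk]; simp
            have g1 : G j k = 0 := by simp [hG, hyj, hyk, hxk, not_lt_of_gt hyj, hyj.ne]
            rw [g1, g2, max_eq_right hd]
            norm_num
          · have hd : 0 ≤ x j * y k - y j * x k := by rw [hyk]; nlinarith
            have g1 : G j k = y j * x k := by
              simp [hG, hyj, hyk, hxk, not_lt_of_gt hyj, hyj.ne, not_lt_of_gt hxk]
            rw [g1, g2, max_eq_left hd, hyk]
            exact ⟨-(y j * x k), by ring⟩
        · -- y j < 0 < y k
          have hd : 0 ≤ x j * y k - y j * x k :=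
            hsign2 j k hjk (mul_neg_of_neg_of_pos hyj hyk)
          have g1 : G j k = x j * y k := by
            simp [hG, hyj, hyk, not_lt_of_gt hyj, not_lt_of_gt hyk, hyj.ne, hyk.ne']
          have g2 : G k j = x k * y j := by
            simp [hG, hyj, hyk, not_lt_of_gt hyj, not_lt_of_gt hyk, hyj.ne, hyk.ne']
          rw [g1, g2, max_eq_left hd]
          exact ⟨-(y j * x k), by ring⟩
      · -- y j = 0, hence y k = 0
        have hk0 := hord j k hjk hyj
        have g1 : G j k = 0 := by simp [hG, hyj]
        have g2 : G k j = 0 := by simp [hG, hk0]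
        rw [g1, g2, hyj, hk0]
        norm_num
      · rcases lt_trichotomy (y k) 0 with hyk | hyk | hyk
        · -- y k < 0 < y j
          have hd : 0 ≤ x j * y k - y j * x k :=
            hsign2 j k hjk (mul_neg_of_pos_of_neg hyj hyk)
          have g1 : G j k = x j * y k := by
            simp [hG, hyj, hyk, not_lt_of_gt hyj, not_lt_of_gt hyk, hyj.ne', hyk.ne]
          have g2 : G k j = x k * y j := by
            simp [hG, hyj, hyk, not_lt_of_gt hyj, not_lt_of_gt hyk, hyj.ne', hyk.ne]
          rw [g1, g2, max_eq_left hd]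
          exact ⟨-(y j * x k), by ring⟩
        · -- 0 < y j, y k = 0
          have g2 : G k j = 0 := by simp [hG, hyk]
          rcases lt_trichotomy (x k) 0 with hxk | hxk | hxk
          · have hd : 0 ≤ x j * y k - y j * x k := by rw [hyk]; nlinarith
            have g1 : G j k = y j * x k := by
              simp [hG, hyj, hyk, hxk, not_lt_of_gt hyj, hyj.ne', not_lt_of_gt hxk]
            rw [g1, g2, max_eq_left hd, hyk]
            exact ⟨-(y j * x k), by ring⟩
          · have hd : x j * y k - y j * x k ≤ 0 := by rw [hyk, hxk]; simp
            have g1 : G j k = 0 := by simp [hG, hyj, hyk, hxk, not_lt_of_gt hyj, hyj.ne']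
            rw [g1, g2, max_eq_right hd]
            norm_num
          · have hd : x j * y k - y j * x k ≤ 0 := by rw [hyk]; nlinarith
            have g1 : G j k = 0 := by
              simp [hG, hyj, hyk, hxk, not_lt_of_gt hyj, hyj.ne', not_lt_of_gt hxk]
            rw [g1, g2, max_eq_right hd]
            norm_num
        · -- 0 < y j, 0 < y k
          have hd : x j * y k - y j * x k ≤ 0 := hsign j k hjk (mul_pos hyj hyk)
          have g1 : G j k = 0 := by
            simp [hG, hyj, hyk, not_lt_of_gt hyj, not_lt_of_gt hyk, hyj.ne', hyk.ne']
          have g2 : G k j = 0 := by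
            simp [hG, hyj, hyk, not_lt_of_gt hyj, not_lt_of_gt hyk, hyj.ne', hyk.ne']
          rw [g1, g2, max_eq_right hd]
          norm_num
    -- the factored full double sum
    have piece : ∀ F H : Fin N → ℤ,
        (∑ i : Fin N, ∑ k : Fin N, F k * H i) = (∑ k, F k) * (∑ i, H i) := by
      intro F H
      simp_rw [← Finset.sum_mul]
      rw [← Finset.mul_sum]
    have hTfull : ∑ i : Fin N, ∑ k : Fin N, G k i =
        (∑ j, if 0 < y j then x j else 0) * (∑ j, if y j < 0 then y j else 0)
        + (∑ j, if y j < 0 then x j else 0) * (∑ j, if 0 < y j then y j else 0)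
        + (∑ j, if 0 < y j then y j else 0) * (∑ j, if y j = 0 ∧ x j < 0 then x j else 0)
        + (∑ j, if y j < 0 then y j else 0) * (∑ j, if y j = 0 ∧ 0 < x j then x j else 0) := by
      simp only [hG]
      simp only [Finset.sum_add_distrib]
      rw [piece (fun k => if 0 < y k then x k else 0) (fun i => if y i < 0 then y i else 0),
        piece (fun k => if y k < 0 then x k else 0) (fun i => if 0 < y i then y i else 0),
        piece (fun k => if 0 < y k then y k else 0) (fun i => if y i = 0 ∧ x i < 0 then x i else 0),
        piece (fun k => if y k < 0 then y k else 0) (fun i => if y i = 0 ∧ 0 < x i then x i else 0)]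
    have hBD : (∑ j, if 0 < y j then y j else 0) + (∑ j, if y j < 0 then y j else 0) = 0 := by
      rw [← Finset.sum_add_distrib]
      rw [show (∑ j, ((if 0 < y j then y j else 0) + (if y j < 0 then y j else 0))) = ∑ j, y j from
        Finset.sum_congr rfl fun i _ => by
          rcases lt_trichotomy (y i) 0 with h | h | h
          · simp [h, not_lt_of_gt h]
          · simp [h]
          · simp [h, not_lt_of_gt h]]
      exact hsy
    have hACE : (∑ j, if 0 < y j then x j else 0) + (∑ j, if y j < 0 then x j else 0)
        + (∑ j, if y j = 0 ∧ 0 < x j then x j else 0)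
        + (∑ j, if y j = 0 ∧ x j < 0 then x j else 0) = 0 := by
      rw [← Finset.sum_add_distrib, ← Finset.sum_add_distrib, ← Finset.sum_add_distrib]
      rw [show (∑ j, ((if 0 < y j then x j else 0) + (if y j < 0 then x j else 0)
          + (if y j = 0 ∧ 0 < x j then x j else 0) + (if y j = 0 ∧ x j < 0 then x j else 0)))
          = ∑ j, x j from
        Finset.sum_congr rfl fun i _ => by
          rcases lt_trichotomy (y i) 0 with h | h | h
          · simp [h, not_lt_of_gt h, h.ne]
          · rcases lt_trichotomy (x i) 0 with h' | h' | h'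
            · simp [h, h', not_lt_of_gt h']
            · simp [h, h']
            · simp [h, h', not_lt_of_gt h']
          · simp [h, not_lt_of_gt h, h.ne']]
      exact hsx
    have hT2 : 2 ∣ ∑ i : Fin N, ∑ k ∈ Ioi i, (G k i + G i k) := by
      rw [← tri_sum G hGdiag, hTfull]
      refine ⟨-((∑ j, if 0 < y j then y j else 0) *
        ((∑ j, if 0 < y j then x j else 0) + (∑ j, if y j = 0 ∧ 0 < x j then x j else 0))), ?_⟩
      linear_combination
        ((∑ j, if 0 < y j then x j else 0) + (∑ j, if y j = 0 ∧ 0 < x j then x j else 0)) * hBD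
        + (∑ j, if 0 < y j then y j else 0) * hACE
    have hST : 2 ∣ (∑ j, ∑ k ∈ Ioi j, max (x j * y k - y j * x k) 0)
        - ∑ i : Fin N, ∑ k ∈ Ioi i, (G k i + G i k) := by
      rw [← Finset.sum_sub_distrib]
      refine Finset.dvd_sum fun j _ => ?_
      rw [← Finset.sum_sub_distrib]
      exact Finset.dvd_sum fun k hk => hterm j k (mem_Ioi.mp hk)
    omega

/-- `b₁,…,b_N ∈ ℤ²` are ordered clockwise projectively. -/
def ClockwiseOrderedZ {N : ℕ} (b : Fin N → ℤ × ℤ) : Prop :=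
  ∀ j k : Fin N, j < k →
    ((b j).2 = 0 → (b k).2 = 0) ∧
    ((b j).2 ≠ 0 → (b k).2 ≠ 0 →
      -((b j).1 : ℝ) / ((b j).2 : ℝ) ≥ -((b k).1 : ℝ) / ((b k).2 : ℝ))

theorem statement14 {N : ℕ} (hN : 3 ≤ N) (b : Fin N → ℤ × ℤ)
    (hnz : ∀ j, b j ≠ 0)
    (hsum : ∑ j, b j = 0)
    (hgcd : ((Finset.univ : Finset (Fin N × Fin N)).filter (fun p => p.1 < p.2)).gcd
      (fun p => (b p.1).1 * (b p.2).2 - (b p.1).2 * (b p.2).1) = 1)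
    (hcw : ClockwiseOrderedZ b) :
    0 < ∑ j : Fin N, ∑ k ∈ Finset.Ioi j, max ((b j).1 * (b k).2 - (b j).2 * (b k).1) 0 ∧
    2 ∣ ∑ j : Fin N, ∑ k ∈ Finset.Ioi j, max ((b j).1 * (b k).2 - (b j).2 * (b k).1) 0 := by
  have hsx : ∑ j, (b j).1 = 0 := by
    have := congrArg Prod.fst hsum
    simpa [Prod.fst_sum] using this
  have hsy : ∑ j, (b j).2 = 0 := by
    have := congrArg Prod.snd hsum
    simpa [Prod.snd_sum] using this
  have hex : ∃ j k : Fin N, j < k ∧ (b j).1 * (b k).2 - (b j).2 * (b k).1 ≠ 0 := by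
    by_contra h
    push_neg at h
    have h0 : ((Finset.univ : Finset (Fin N × Fin N)).filter (fun p => p.1 < p.2)).gcd
        (fun p => (b p.1).1 * (b p.2).2 - (b p.1).2 * (b p.2).1) = 0 :=
      Finset.gcd_eq_zero_iff.mpr fun p hp => h p.1 p.2 (mem_filter.mp hp).2
    rw [hgcd] at h0
    exact one_ne_zero h0
  exact aux (fun j => (b j).1) (fun j => (b j).2) hsx hsy hex
    (fun j k h => (hcw j k h).1) (fun j k h => (hcw j k h).2)
end
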